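/- Let R, R̄ > 0 and let P(y^n) be a probability distribution on sequences y^n = (y₁, …, y_n) ∈ {R, −R̄}^n with P(y^n) > 0 for all sequences. Let f_i(y^{i−1}) be betting fractions depending on the past outcomes y^{i−1} = (y₁, …, y_{i−1}), with 1 + f_i(y^{i−1})·y_i > 0 for all sequences and all i. Then ⟨exp[Σ_{i=1}^n ln(1 + f_i(y^{i−1})·y_i) − ln P(y^n) + ln Q(y^n)]⟩_{y^n ∼ P} = 1, where Q(y^n) = ∏_{i=1}^n Q(y_i); equivalently, Σ_{y^n} ∏_{i=1}^n (1 + f_i(y^{i−1})·y_i)·Q(y_i) = 1. -/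

import Mathlib

/-- Outcome value map for binary gambling: `true ↦ R` (win), `false ↦ -R̄` (loss). -/
noncomputable def val (R Rbar : ℝ) (b : Bool) : ℝ := if b then R else -Rbar

/-- The reference distribution `Q` on the two outcomes:
`Q(R) = R̄/(R+R̄)`, `Q(-R̄) = R/(R+R̄)`. -/
noncomputable def Qb (R Rbar : ℝ) (b : Bool) : ℝ :=
  if b then Rbar / (R + Rbar) else R / (R + Rbar)

/-!
Under `Q` the game is fair: `∑_b (1 + c·val b)·Q b = 1` for every stake `c`. Hence, given the past,
the factor `(1 + f_i·y_i)·Q(y_i)` is a conditional probability of `y_i`, and a product of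
conditional probabilities sums to one over all sequences (sum out the last outcome, then
induct). The first identity is the same sum once `P` cancels against `exp (- log P)`.
-/

theorem sum_prod_eq_one_of_causal {α : Type*} [Fintype α] [Nonempty α] :
    ∀ (n : ℕ) (g : Fin n → (Fin n → α) → ℝ),
    (∀ i y y', (∀ j ≤ i, y j = y' j) → g i y = g i y') →
    (∀ i y, ∑ a, g i (Function.update y i a) = 1) →
    ∑ y, ∏ i, g i y = 1
  | 0, _, _, _ => by simp
  | n + 1, g, hcausal, hnorm => by
    obtain ⟨a₀⟩ := ‹Nonempty α›
    set g' : Fin n → (Fin n → α) → ℝ := fun i z ↦ g i.castSucc (Fin.snoc z a₀)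
    have hinit : ∀ z a i, g i.castSucc (Fin.snoc z a) = g' i z := fun z a i ↦
      hcausal _ _ _ fun j hj ↦ by
        have hj' : j ≠ Fin.last n := (lt_of_le_of_lt hj (Fin.castSucc_lt_last i)).ne
        obtain ⟨k, rfl⟩ := Fin.exists_castSucc_eq.2 hj'
        simp only [Fin.snoc_castSucc]
    have hlast : ∀ z, ∑ a, g (Fin.last n) (Fin.snoc z a) = 1 := fun z ↦ by
      simpa only [Fin.update_snoc_last] using hnorm (Fin.last n) (Fin.snoc z a₀)
    have ih : ∑ z, ∏ i, g' i z = 1 := by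
      refine sum_prod_eq_one_of_causal n g' (fun i z z' h ↦ hcausal _ _ _ fun j hj ↦ ?_)
        fun i z ↦ by simpa only [g', Fin.snoc_update] using hnorm i.castSucc (Fin.snoc z a₀)
      induction j using Fin.lastCases with
      | last => exact absurd hj (Fin.castSucc_lt_last i).not_ge
      | cast k => simpa only [Fin.snoc_castSucc] using h k (Fin.castSucc_le_castSucc_iff.1 hj)
    calc ∑ y, ∏ i, g i y
        = ∑ z : Fin n → α, ∑ a, ∏ i, g i (Fin.snoc z a) := by
          rw [← (Fin.snocEquiv fun _ ↦ α).sum_comp, Fintype.sum_prod_type, Finset.sum_comm]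
          rfl
      _ = ∑ z, (∏ i, g' i z) * ∑ a, g (Fin.last n) (Fin.snoc z a) := by
          simp only [Fin.prod_univ_castSucc, hinit, Finset.mul_sum]
      _ = 1 := by simp only [hlast, mul_one, ih]

theorem sum_one_add_mul_val_mul_Qb {R Rbar : ℝ} (h : R + Rbar ≠ 0) (c : ℝ) :
    ∑ b, (1 + c * val R Rbar b) * Qb R Rbar b = 1 := by
  simp only [Fintype.sum_bool, val, Qb, if_true, Bool.false_eq_true, if_false]
  field_simp
  ring

theorem Qb_pos {R Rbar : ℝ} (hR : 0 < R) (hRbar : 0 < Rbar) (b : Bool) : 0 < Qb R Rbar b := by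
  cases b <;> simp only [Qb, Bool.false_eq_true, if_true, if_false] <;> positivity

theorem stmt10_general (n : ℕ) (R Rbar : ℝ) (hR : 0 < R) (hRbar : 0 < Rbar)
    (P : (Fin n → Bool) → ℝ) (hP : ∀ y, 0 < P y)
    (f : Fin n → (Fin n → Bool) → ℝ)
    (hcausal : ∀ (i : Fin n) (y y' : Fin n → Bool),
      (∀ j, j < i → y j = y' j) → f i y = f i y')
    (hf : ∀ i y, 0 < 1 + f i y * val R Rbar (y i)) :
    (∑ y, P y * Real.exp ((∑ i, Real.log (1 + f i y * val R Rbar (y i)))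
        - Real.log (P y) + Real.log (∏ i, Qb R Rbar (y i))) = 1)
    ∧ (∑ y, ∏ i, (1 + f i y * val R Rbar (y i)) * Qb R Rbar (y i) = 1) := by
  have hsum : ∑ y, ∏ i, (1 + f i y * val R Rbar (y i)) * Qb R Rbar (y i) = 1 := by
    refine sum_prod_eq_one_of_causal n _ (fun i y y' h ↦ ?_) fun i y ↦ ?_
    · rw [hcausal i y y' fun j hj ↦ h j hj.le, h i le_rfl]
    · simpa only [Function.update_self, hcausal i (Function.update y i _) y
        fun j hj ↦ Function.update_of_ne hj.ne _ _] using
        sum_one_add_mul_val_mul_Qb (by positivity : R + Rbar ≠ 0) (f i y)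
  refine ⟨(Finset.sum_congr rfl fun y _ ↦ ?_).trans hsum, hsum⟩
  rw [Real.exp_add, Real.exp_sub, Real.exp_sum, Real.exp_log (hP y),
    Real.exp_log (Finset.prod_pos fun i _ ↦ Qb_pos hR hRbar (y i)), Finset.prod_mul_distrib,
    Finset.prod_congr rfl fun i _ ↦ Real.exp_log (hf i y)]
  field_simp [(hP y).ne']

/-- Jarzynski-type equality for binary gambling with memory effects:
`⟨exp[n·g_n + s_{y^n} - s^Q_{y^n}]⟩ = 1`, equivalently
`Σ_{y^n} Π_i (1 + f_i(y^{i-1})·y_i)·Q(y_i) = 1`, for any betting fractions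
`f_i` depending only on the past outcomes `y^{i-1}`. -/
theorem stmt10 (n : ℕ) (R Rbar : ℝ) (hR : 0 < R) (hRbar : 0 < Rbar)
    (P : (Fin n → Bool) → ℝ) (hP : ∀ y, 0 < P y) (hPsum : ∑ y, P y = 1)
    (f : Fin n → (Fin n → Bool) → ℝ)
    (hcausal : ∀ (i : Fin n) (y y' : Fin n → Bool),
      (∀ j, j < i → y j = y' j) → f i y = f i y')
    (hf : ∀ i y, 0 < 1 + f i y * val R Rbar (y i)) :
    (∑ y, P y * Real.exp ((∑ i, Real.log (1 + f i y * val R Rbar (y i)))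
        - Real.log (P y) + Real.log (∏ i, Qb R Rbar (y i))) = 1)
    ∧ (∑ y, ∏ i, (1 + f i y * val R Rbar (y i)) * Qb R Rbar (y i) = 1) :=
  stmt10_general n R Rbar hR hRbar P hP f hcausal hf
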